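/- Let C be a bivariate copula concentrated on the two diagonals. Then ρ(C) ≥ (2√3/9)·(1 + 2·φ(C))^{3/2} − 1. -/

import Mathlib

open MeasureTheory Set

noncomputable section

/-- A bivariate copula on `[0,1]²`. -/
def IsCopula (C : ℝ → ℝ → ℝ) : Prop :=
  (∀ u ∈ Icc (0:ℝ) 1, ∀ v ∈ Icc (0:ℝ) 1, C u v ∈ Icc (0:ℝ) 1) ∧
  (∀ u ∈ Icc (0:ℝ) 1, C u 0 = 0 ∧ C 0 u = 0 ∧ C u 1 = u ∧ C 1 u = u) ∧
  (∀ u₁ u₂ v₁ v₂ : ℝ, 0 ≤ u₁ → u₁ ≤ u₂ → u₂ ≤ 1 → 0 ≤ v₁ → v₁ ≤ v₂ → v₂ ≤ 1 →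
    0 ≤ C u₂ v₂ - C u₂ v₁ - C u₁ v₂ + C u₁ v₁)

/-- Spearman's rho of a copula. -/
def spearmanRho (C : ℝ → ℝ → ℝ) : ℝ :=
  12 * (∫ u in (0:ℝ)..1, ∫ v in (0:ℝ)..1, C u v) - 3

/-- Spearman's footrule of a copula. -/
def spearmanFootrule (C : ℝ → ℝ → ℝ) : ℝ :=
  6 * (∫ u in (0:ℝ)..1, C u u) - 2

/-- A copula whose mass is concentrated on the main and opposite diagonal:
its values are determined by its diagonal `δ(u) = C(u,u)` as stated. -/
def ConcentratedOnDiagonals (C : ℝ → ℝ → ℝ) : Prop :=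
  ∀ u ∈ Icc (0:ℝ) 1, ∀ v ∈ Icc (0:ℝ) 1,
    (u ≤ v → v ≤ 1 - u → C u v = C u u) ∧
    (v ≤ u → u ≤ 1 - v → C u v = C v v) ∧
    (1 - u ≤ v → v ≤ u → C u v = C u u + v - u) ∧
    (1 - v ≤ u → u ≤ v → C u v = C v v + u - v)

/-!
Write `δ u = C u u`. Evaluating `C` at `(u, 1 - u)` through two different clauses of the
concentration hypothesis gives `δ (1 - u) = δ u + 1 - 2u`, and from it the radial symmetry
`C (1 - u) (1 - v) = C u v + 1 - u - v`; hence everything is determined by `δ` on `[0, 1/2]`.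
Integrating, with `S = ∫₀^{1/2} δ` and `K = ∫₀^{1/2} δ(v) (1/2 - v) dv`, one finds
`1 + 2φ = 24 S` and `ρ = 96 K - 1`. On `[0, 1/2]` the diagonal is nonnegative, vanishes at `0`
and `v - δ v` is nondecreasing. Among such functions with integral `S`, `K` is smallest for the
ramp `v ↦ max 0 (v - b)` with `(1/2 - b)² = 2S`: the difference from the ramp has integral zero
and changes sign once, from `+` to `-`, against the decreasing weight `1/2 - v`. The ramp gives
`K = (2S)^{3/2} / 6`, which is the claimed bound.
-/

lemma exists_sign_change_of_antitoneOn {f : ℝ → ℝ} {p q : ℝ} (hpq : p ≤ q)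
    (hf : AntitoneOn f (Icc p q)) (hp : 0 ≤ f p) :
    ∃ r ∈ Icc p q, (∀ v ∈ Icc p q, v < r → 0 ≤ f v) ∧ ∀ v ∈ Icc p q, r < v → f v ≤ 0 := by
  set A := {v ∈ Icc p q | 0 ≤ f v}
  have hpA : p ∈ A := ⟨⟨le_rfl, hpq⟩, hp⟩
  have hA : BddAbove A := ⟨q, fun v hv => hv.1.2⟩
  refine ⟨sSup A, ⟨le_csSup hA hpA, csSup_le ⟨p, hpA⟩ fun v hv => hv.1.2⟩, ?_, ?_⟩
  · intro v hv hvr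
    obtain ⟨w, hwA, hvw⟩ := (lt_csSup_iff hA ⟨p, hpA⟩).1 hvr
    exact hwA.2.trans (hf hv hwA.1 hvw.le)
  · intro v hv hrv
    by_contra! hfv
    exact (le_csSup hA ⟨hv, hfv.le⟩).not_gt hrv

lemma integral_mul_nonneg_of_sign_change {f w : ℝ → ℝ} {a b r : ℝ} (hab : a ≤ b)
    (hf : IntervalIntegrable f volume a b)
    (hfw : IntervalIntegrable (fun v => f v * w v) volume a b)
    (hw : Antitone w) (hf₀ : ∫ v in a..b, f v = 0)
    (hleft : ∀ v ∈ Icc a b, v < r → 0 ≤ f v) (hright : ∀ v ∈ Icc a b, r < v → f v ≤ 0) :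
    0 ≤ ∫ v in a..b, f v * w v := by
  have hshift : ∫ v in a..b, f v * w v = ∫ v in a..b, f v * (w v - w r) := by
    simp only [mul_sub, intervalIntegral.integral_sub hfw (hf.mul_const _),
      intervalIntegral.integral_mul_const, hf₀, zero_mul, sub_zero]
  rw [hshift]
  refine intervalIntegral.integral_nonneg hab fun v hv => ?_
  rcases lt_trichotomy v r with hvr | rfl | hrv
  · exact mul_nonneg (hleft v hv hvr) (sub_nonneg.2 (hw hvr.le))
  · simp
  · exact mul_nonneg_of_nonpos_of_nonpos (hright v hv hrv) (sub_nonpos.2 (hw hrv.le))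

lemma integral_max_zero_sub_mul {a b : ℝ} (hb : 0 ≤ b) (hba : b ≤ a) {w : ℝ → ℝ}
    (hw : Continuous w) :
    ∫ v in 0..a, max 0 (v - b) * w v = ∫ v in b..a, (v - b) * w v := by
  have hcont : Continuous fun v => max 0 (v - b) * w v := by fun_prop
  rw [← intervalIntegral.integral_add_adjacent_intervals (hcont.intervalIntegrable 0 b)
    (hcont.intervalIntegrable b a)]
  have hzero : ∫ v in 0..b, max 0 (v - b) * w v = 0 := by
    rw [intervalIntegral.integral_congr (g := fun _ => 0), intervalIntegral.integral_zero]
    intro v hv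
    rw [uIcc_of_le hb] at hv
    simp [max_eq_left (sub_nonpos.2 hv.2)]
  have hlin : ∫ v in b..a, max 0 (v - b) * w v = ∫ v in b..a, (v - b) * w v := by
    refine intervalIntegral.integral_congr fun v hv => ?_
    rw [uIcc_of_le hba] at hv
    simp [max_eq_right (sub_nonneg.2 hv.1)]
  rw [hzero, hlin, zero_add]

lemma integral_sub_mul_sub (a b : ℝ) : ∫ v in b..a, (v - b) * (a - v) = (a - b) ^ 3 / 6 := by
  have : ∀ v, (v - b) * (a - v) = (a - b) * (v - b) - (v - b) ^ 2 := fun v => by ring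
  simp only [this]
  rw [intervalIntegral.integral_sub (Continuous.intervalIntegrable (by fun_prop) _ _)
    (Continuous.intervalIntegrable (by fun_prop) _ _)]
  rw [intervalIntegral.integral_const_mul, intervalIntegral.integral_comp_sub_right (fun x => x),
    intervalIntegral.integral_comp_sub_right (fun x => x ^ 2), integral_id, integral_pow]
  ring

lemma integral_max_zero_sub_mul_sub_le {d : ℝ → ℝ} {a b : ℝ} (hb₀ : 0 ≤ b) (hb : b ≤ a)
    (hd : ∀ v ∈ Icc 0 a, 0 ≤ d v) (hmono : MonotoneOn (fun v => v - d v) (Icc 0 a))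
    (hd_int : IntervalIntegrable d volume 0 a)
    (hS : ∫ v in 0..a, d v = ∫ v in 0..a, max 0 (v - b)) :
    ∫ v in 0..a, max 0 (v - b) * (a - v) ≤ ∫ v in 0..a, d v * (a - v) := by
  set E := fun v => d v - max 0 (v - b)
  have hramp : Continuous fun v => max 0 (v - b) := by fun_prop
  have hE_int : IntervalIntegrable E volume 0 a := hd_int.sub (hramp.intervalIntegrable 0 a)
  have hEw : IntervalIntegrable (fun v => E v * (a - v)) volume 0 a :=
    hE_int.mul_continuousOn (by fun_prop)
  have hE₀ : ∫ v in 0..a, E v = 0 := by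
    rw [intervalIntegral.integral_sub hd_int (hramp.intervalIntegrable 0 a), hS, sub_self]
  have hE_anti : AntitoneOn E (Icc b a) := by
    intro x hx y hy hxy
    have := hmono (Icc_subset_Icc_left hb₀ hx) (Icc_subset_Icc_left hb₀ hy) hxy
    simp only [E, max_eq_right (sub_nonneg.2 hx.1), max_eq_right (sub_nonneg.2 hy.1)]
    linarith
  obtain ⟨r, hr, hleft, hright⟩ := exists_sign_change_of_antitoneOn hb hE_anti
    (by simpa [E] using hd b ⟨hb₀, hb⟩)
  have hcross := integral_mul_nonneg_of_sign_change (r := r) (w := fun v => a - v)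
    (hb₀.trans hb) hE_int hEw (fun _ _ hxy => sub_le_sub_left hxy a) hE₀
    (fun v hv hvr => by
      rcases le_or_gt v b with hvb | hbv
      · simpa [E, max_eq_left (sub_nonpos.2 hvb)] using hd v hv
      · exact hleft v ⟨hbv.le, hv.2⟩ hvr)
    (fun v hv hrv => hright v ⟨hr.1.trans hrv.le, hv.2⟩ hrv)
  have hsplit : ∫ v in 0..a, d v * (a - v)
      = (∫ v in 0..a, E v * (a - v)) + ∫ v in 0..a, max 0 (v - b) * (a - v) := by
    rw [← intervalIntegral.integral_add hEw
      (Continuous.intervalIntegrable (u := fun v => max 0 (v - b) * (a - v)) (by fun_prop) 0 a)]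
    simp only [E]
    congr 1; ext v; ring
  linarith

theorem two_mul_integral_rpow_div_six_le_integral_mul_sub {d : ℝ → ℝ} {a : ℝ} (ha : 0 ≤ a)
    (hd : ∀ v ∈ Icc 0 a, 0 ≤ d v) (hd₀ : d 0 = 0)
    (hmono : MonotoneOn (fun v => v - d v) (Icc 0 a)) :
    (2 * ∫ v in 0..a, d v) ^ ((3:ℝ) / 2) / 6 ≤ ∫ v in 0..a, d v * (a - v) := by
  have hd_int : IntervalIntegrable d volume 0 a := by
    have hm : IntervalIntegrable (fun v => v - d v) volume 0 a :=
      (hmono.mono (uIcc_of_le ha).subset).intervalIntegrable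
    simpa using intervalIntegral.intervalIntegrable_id.sub hm
  have hd_le : ∀ v ∈ Icc 0 a, d v ≤ v := fun v hv => by
    simpa [hd₀] using hmono ⟨le_rfl, ha⟩ hv hv.1
  set S := ∫ v in 0..a, d v
  have hS₀ : 0 ≤ S := intervalIntegral.integral_nonneg ha hd
  have hS_le : S ≤ a ^ 2 / 2 := by
    have := intervalIntegral.integral_mono_on ha hd_int intervalIntegral.intervalIntegrable_id hd_le
    simpa [integral_id] using this
  -- `b` is chosen so that the ramp `v ↦ max 0 (v - b)` also has integral `S`
  set h := √(2 * S)
  have hh_le : h ≤ a := Real.sqrt_le_iff.2 ⟨ha, by linarith⟩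
  have hh_sq : h ^ 2 = 2 * S := Real.sq_sqrt (by linarith)
  set b := a - h
  have hb₀ : 0 ≤ b := sub_nonneg.2 hh_le
  have hb_le : b ≤ a := sub_le_self a (Real.sqrt_nonneg _)
  have hramp : ∫ v in 0..a, max 0 (v - b) = S := by
    have := integral_max_zero_sub_mul hb₀ hb_le (w := fun _ => 1) continuous_const
    simp only [mul_one] at this
    rw [this, intervalIntegral.integral_comp_sub_right (fun x => x), integral_id]
    linear_combination hh_sq / 2
  have hpow : (2 * S) ^ ((3:ℝ) / 2) = h ^ 3 := by
    rw [Real.rpow_div_two_eq_sqrt _ (by linarith)]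
    norm_cast
  calc (2 * S) ^ ((3:ℝ) / 2) / 6
      = ∫ v in 0..a, max 0 (v - b) * (a - v) := by
        rw [hpow, integral_max_zero_sub_mul hb₀ hb_le (by fun_prop), integral_sub_mul_sub,
          sub_sub_cancel]
    _ ≤ ∫ v in 0..a, d v * (a - v) :=
        integral_max_zero_sub_mul_sub_le hb₀ hb_le hd hmono hd_int hramp.symm

theorem integral_primitive_eq_integral_mul_sub {f : ℝ → ℝ} {a b : ℝ} (hab : a ≤ b)
    (hf : ContinuousOn f (Icc a b)) :
    ∫ x in a..b, (∫ t in a..x, f t) = ∫ x in a..b, f x * (b - x) := by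
  have hf_int : IntervalIntegrable f volume a b := hf.intervalIntegrable_of_Icc hab
  have hprim := intervalIntegral.integral_mul_deriv_eq_deriv_mul_of_hasDerivAt
    (u := fun x => ∫ t in a..x, f t) (v := fun x => x - b) (u' := f) (v' := fun _ => 1)
    (intervalIntegral.continuousOn_primitive_interval' hf_int left_mem_uIcc)
    (by fun_prop)
    (fun x hx => by
      rw [min_eq_left hab, max_eq_right hab] at hx
      exact intervalIntegral.integral_hasDerivAt_right
        ((hf.mono (Icc_subset_Icc_right hx.2.le)).intervalIntegrable_of_Icc hx.1.le)
        ((hf.mono Ioo_subset_Icc_self).stronglyMeasurableAtFilter isOpen_Ioo x hx)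
        (hf.continuousAt (Icc_mem_nhds hx.1 hx.2)))
    (fun x _ => (hasDerivAt_id x).sub_const b) hf_int intervalIntegrable_const
  simp only [mul_one, intervalIntegral.integral_same, sub_self, mul_zero, zero_mul, zero_sub]
    at hprim
  rw [hprim, ← intervalIntegral.integral_neg]
  congr 1; ext x; ring

namespace IsCopula

variable {C : ℝ → ℝ → ℝ}

theorem monotoneOn_left (hC : IsCopula C) {v : ℝ} (hv : v ∈ Icc 0 1) :
    MonotoneOn (fun u => C u v) (Icc 0 1) := by
  intro u₁ hu₁ u₂ hu₂ hu
  have := hC.2.2 u₁ u₂ 0 v hu₁.1 hu hu₂.2 le_rfl hv.1 hv.2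
  simp only [(hC.2.1 u₁ hu₁).1, (hC.2.1 u₂ hu₂).1] at this
  linarith

theorem monotoneOn_right (hC : IsCopula C) {u : ℝ} (hu : u ∈ Icc 0 1) :
    MonotoneOn (C u) (Icc 0 1) := by
  intro v₁ hv₁ v₂ hv₂ hv
  have := hC.2.2 0 u v₁ v₂ le_rfl hu.1 hu.2 hv₁.1 hv hv₂.2
  simp only [(hC.2.1 v₁ hv₁).2.1, (hC.2.1 v₂ hv₂).2.1] at this
  linarith

theorem apply_sub_apply_le_left {u₁ u₂ v : ℝ} (hC : IsCopula C) (hu₁ : 0 ≤ u₁) (hu : u₁ ≤ u₂)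
    (hu₂ : u₂ ≤ 1) (hv : v ∈ Icc 0 1) : C u₂ v - C u₁ v ≤ u₂ - u₁ := by
  have := hC.2.2 u₁ u₂ v 1 hu₁ hu hu₂ hv.1 hv.2 le_rfl
  rw [(hC.2.1 u₁ ⟨hu₁, hu.trans hu₂⟩).2.2.1, (hC.2.1 u₂ ⟨hu₁.trans hu, hu₂⟩).2.2.1] at this
  linarith

theorem apply_sub_apply_le_right {u v₁ v₂ : ℝ} (hC : IsCopula C) (hu : u ∈ Icc 0 1) (hv₁ : 0 ≤ v₁)
    (hv : v₁ ≤ v₂) (hv₂ : v₂ ≤ 1) : C u v₂ - C u v₁ ≤ v₂ - v₁ := by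
  have := hC.2.2 u 1 v₁ v₂ hu.1 hu.2 le_rfl hv₁ hv hv₂
  rw [(hC.2.1 v₁ ⟨hv₁, hv.trans hv₂⟩).2.2.2, (hC.2.1 v₂ ⟨hv₁.trans hv, hv₂⟩).2.2.2] at this
  linarith

theorem lipschitzOnWith_diag (hC : IsCopula C) : LipschitzOnWith 2 (fun u => C u u) (Icc 0 1) := by
  have key : ∀ x ∈ Icc (0:ℝ) 1, ∀ y ∈ Icc (0:ℝ) 1, x ≤ y → |C y y - C x x| ≤ 2 * |y - x| := by
    intro x hx y hy hxy
    have h₁ := hC.monotoneOn_left hy hx hy hxy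
    have h₂ := hC.monotoneOn_right hx hx hy hxy
    have h₃ := hC.apply_sub_apply_le_left hx.1 hxy hy.2 hy
    have h₄ := hC.apply_sub_apply_le_right hx hx.1 hxy hy.2
    rw [abs_of_nonneg (by linarith), abs_of_nonneg (by linarith)]
    linarith
  refine LipschitzOnWith.of_dist_le_mul fun x hx y hy => ?_
  rw [Real.dist_eq, Real.dist_eq, NNReal.coe_ofNat]
  rcases le_total x y with hxy | hyx
  · rw [abs_sub_comm, abs_sub_comm x]; exact key x hx y hy hxy
  · exact key y hy x hx hyx

theorem intervalIntegrable_diag (hC : IsCopula C) {a b : ℝ} (ha : a ∈ Icc 0 1)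
    (hb : b ∈ Icc 0 1) : IntervalIntegrable (fun u => C u u) volume a b :=
  (hC.lipschitzOnWith_diag.continuousOn.mono (uIcc_subset_Icc ha hb)).intervalIntegrable

theorem intervalIntegrable_right (hC : IsCopula C) {u a b : ℝ} (hu : u ∈ Icc 0 1)
    (ha : a ∈ Icc 0 1) (hb : b ∈ Icc 0 1) : IntervalIntegrable (C u) volume a b :=
  ((hC.monotoneOn_right hu).mono (uIcc_subset_Icc ha hb)).intervalIntegrable

theorem intervalIntegrable_integral (hC : IsCopula C) {a b : ℝ} (ha : a ∈ Icc 0 1)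
    (hb : b ∈ Icc 0 1) : IntervalIntegrable (fun u => ∫ v in 0..1, C u v) volume a b := by
  refine MonotoneOn.intervalIntegrable (MonotoneOn.mono ?_ (uIcc_subset_Icc ha hb))
  intro u₁ hu₁ u₂ hu₂ hu
  have h₀ : (0:ℝ) ∈ Icc (0:ℝ) 1 := ⟨le_rfl, zero_le_one⟩
  have h₁ : (1:ℝ) ∈ Icc (0:ℝ) 1 := ⟨zero_le_one, le_rfl⟩
  exact intervalIntegral.integral_mono_on zero_le_one (hC.intervalIntegrable_right hu₁ h₀ h₁)
    (hC.intervalIntegrable_right hu₂ h₀ h₁) fun v hv => hC.monotoneOn_left hv hu₁ hu₂ hu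

end IsCopula

namespace ConcentratedOnDiagonals

variable {C : ℝ → ℝ → ℝ}

theorem diag_one_sub (hD : ConcentratedOnDiagonals C) {u : ℝ} (hu : u ∈ Icc 0 1) :
    C (1 - u) (1 - u) = C u u + 1 - 2 * u := by
  have hu' : 1 - u ∈ Icc (0:ℝ) 1 := ⟨by linarith [hu.2], by linarith [hu.1]⟩
  obtain ⟨h₁, h₂, h₃, h₄⟩ := hD u hu (1 - u) hu'
  rcases le_total u (1 / 2) with h | h
  · linarith [h₁ (by linarith) le_rfl, h₄ (by linarith) (by linarith)]
  · linarith [h₂ (by linarith) (by linarith), h₃ le_rfl (by linarith)]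

theorem apply_one_sub_one_sub (hD : ConcentratedOnDiagonals C) {u v : ℝ} (hu : u ∈ Icc 0 1)
    (hv : v ∈ Icc 0 1) : C (1 - u) (1 - v) = C u v + 1 - u - v := by
  have hu' : 1 - u ∈ Icc (0:ℝ) 1 := ⟨by linarith [hu.2], by linarith [hu.1]⟩
  have hv' : 1 - v ∈ Icc (0:ℝ) 1 := ⟨by linarith [hv.2], by linarith [hv.1]⟩
  obtain ⟨p₁, p₂, p₃, p₄⟩ := hD u hu v hv
  obtain ⟨q₁, q₂, q₃, q₄⟩ := hD (1 - u) hu' (1 - v) hv'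
  have du := hD.diag_one_sub hu
  have dv := hD.diag_one_sub hv
  -- `(u, v) ↦ (1 - u, 1 - v)` swaps the triangles `u ≤ v ≤ 1 - u` and `1 - u ≤ v ≤ u`, and
  -- likewise the other two
  rcases le_total u v with huv | hvu <;> rcases le_total (u + v) 1 with hs | hs
  · linarith [p₁ huv (by linarith), q₃ (by linarith) (by linarith)]
  · linarith [p₄ (by linarith) huv, q₂ (by linarith) (by linarith)]
  · linarith [p₂ hvu (by linarith), q₄ (by linarith) (by linarith)]
  · linarith [p₃ (by linarith) hvu, q₁ (by linarith) (by linarith)]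

theorem monotoneOn_sub_diag (hC : IsCopula C) (hD : ConcentratedOnDiagonals C) :
    MonotoneOn (fun u => u - C u u) (Icc 0 (1 / 2)) := by
  intro u₁ hu₁ u₂ hu₂ hu
  have hu₁' : u₁ ∈ Icc (0:ℝ) 1 := ⟨hu₁.1, by linarith [hu₁.2]⟩
  have hu₂' : u₂ ∈ Icc (0:ℝ) 1 := ⟨hu₂.1, by linarith [hu₂.2]⟩
  have h := hC.2.2 u₁ u₂ u₂ 1 hu₁.1 hu hu₂'.2 hu₂.1 hu₂'.2 le_rfl
  rw [(hC.2.1 u₁ hu₁').2.2.1, (hC.2.1 u₂ hu₂').2.2.1,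
    (hD u₁ hu₁' u₂ hu₂').1 hu (by linarith [hu₁.1, hu₂.2])] at h
  dsimp only
  linarith

theorem integral_diag_one_sub (hC : IsCopula C) (hD : ConcentratedOnDiagonals C) {a : ℝ}
    (ha : a ∈ Icc 0 1) : ∫ v in (1 - a)..1, C v v = (∫ v in 0..a, C v v) + a - a ^ 2 := by
  have hrefl : ∫ v in 0..a, C (1 - v) (1 - v) = ∫ v in 0..a, (C v v + (1 - 2 * v)) := by
    refine intervalIntegral.integral_congr fun v hv => ?_
    rw [uIcc_of_le ha.1] at hv
    simp only [hD.diag_one_sub ⟨hv.1, hv.2.trans ha.2⟩]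
    ring
  rw [intervalIntegral.integral_comp_sub_left (fun v => C v v), sub_zero] at hrefl
  rw [hrefl, intervalIntegral.integral_add (hC.intervalIntegrable_diag ⟨le_rfl, zero_le_one⟩ ha)
    (intervalIntegrable_const.sub (intervalIntegral.intervalIntegrable_id.const_mul 2)),
    intervalIntegral.integral_sub intervalIntegrable_const
      (intervalIntegral.intervalIntegrable_id.const_mul 2),
    intervalIntegral.integral_const_mul, integral_id]
  simp only [intervalIntegral.integral_const, smul_eq_mul]
  ring

theorem integral_diag (hC : IsCopula C) (hD : ConcentratedOnDiagonals C) :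
    ∫ u in 0..1, C u u = 2 * (∫ u in 0..1 / 2, C u u) + 1 / 4 := by
  have h := hD.integral_diag_one_sub hC (a := 1 / 2) ⟨by norm_num, by norm_num⟩
  rw [show (1:ℝ) - 1 / 2 = 1 / 2 by norm_num] at h
  rw [← intervalIntegral.integral_add_adjacent_intervals (b := 1 / 2)
    (hC.intervalIntegrable_diag ⟨le_rfl, zero_le_one⟩ ⟨by norm_num, by norm_num⟩)
    (hC.intervalIntegrable_diag ⟨by norm_num, by norm_num⟩ ⟨zero_le_one, le_rfl⟩), h]
  ring

theorem integral_section_of_le_half (hC : IsCopula C) (hD : ConcentratedOnDiagonals C) {u : ℝ}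
    (hu : u ∈ Icc 0 (1 / 2)) :
    ∫ v in 0..1, C u v = 2 * (∫ v in 0..u, C v v) + (1 - 2 * u) * C u u + u ^ 2 / 2 := by
  have hu₁ : u ∈ Icc (0:ℝ) 1 := ⟨hu.1, by linarith [hu.2]⟩
  have hu₂ : 1 - u ∈ Icc (0:ℝ) 1 := ⟨by linarith [hu.2], by linarith [hu.1]⟩
  have hu_le : u ≤ 1 - u := by linarith [hu.2]
  have h₀ : (0:ℝ) ∈ Icc (0:ℝ) 1 := ⟨le_rfl, zero_le_one⟩
  have h₁ : (1:ℝ) ∈ Icc (0:ℝ) 1 := ⟨zero_le_one, le_rfl⟩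
  have hlow : ∫ v in 0..u, C u v = ∫ v in 0..u, C v v := by
    refine intervalIntegral.integral_congr fun v hv => ?_
    rw [uIcc_of_le hu.1] at hv
    exact (hD u hu₁ v ⟨hv.1, hv.2.trans hu₁.2⟩).2.1 hv.2 (by linarith [hv.2, hu.2])
  have hmid : ∫ v in u..(1 - u), C u v = (1 - 2 * u) * C u u := by
    rw [intervalIntegral.integral_congr (g := fun _ => C u u) fun v hv => ?_,
      intervalIntegral.integral_const, smul_eq_mul]
    · ring
    rw [uIcc_of_le hu_le] at hv
    exact (hD u hu₁ v ⟨hu.1.trans hv.1, hv.2.trans hu₂.2⟩).1 hv.1 hv.2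
  have hhigh : ∫ v in (1 - u)..1, C u v = (∫ v in 0..u, C v v) + u ^ 2 / 2 := by
    rw [intervalIntegral.integral_congr (g := fun v => C v v + (u - v)) fun v hv => ?_,
      intervalIntegral.integral_add (hC.intervalIntegrable_diag hu₂ h₁)
        (intervalIntegrable_const.sub intervalIntegral.intervalIntegrable_id),
      hD.integral_diag_one_sub hC hu₁,
      intervalIntegral.integral_sub intervalIntegrable_const intervalIntegral.intervalIntegrable_id,
      integral_id, intervalIntegral.integral_const, smul_eq_mul]
    · ring
    rw [uIcc_of_le hu₂.2] at hv
    have := (hD u hu₁ v ⟨hu₂.1.trans hv.1, hv.2⟩).2.2.2 (by linarith [hv.1])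
      (by linarith [hv.1, hu.2])
    dsimp only
    linarith
  rw [← intervalIntegral.integral_add_adjacent_intervals (b := u)
      (hC.intervalIntegrable_right hu₁ h₀ hu₁) (hC.intervalIntegrable_right hu₁ hu₁ h₁),
    ← intervalIntegral.integral_add_adjacent_intervals (a := u) (b := 1 - u)
      (hC.intervalIntegrable_right hu₁ hu₁ hu₂) (hC.intervalIntegrable_right hu₁ hu₂ h₁),
    hlow, hmid, hhigh]
  ring

theorem integral_section_one_sub (hC : IsCopula C) (hD : ConcentratedOnDiagonals C) {u : ℝ}
    (hu : u ∈ Icc 0 1) : ∫ v in 0..1, C (1 - u) v = (∫ v in 0..1, C u v) + 1 / 2 - u := by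
  have h := intervalIntegral.integral_comp_sub_left (a := 0) (b := 1) (C (1 - u)) 1
  simp only [sub_zero, sub_self] at h
  rw [← h, intervalIntegral.integral_congr (g := fun v => C u v + (1 - u - v)) fun v hv => ?_,
    intervalIntegral.integral_add (hC.intervalIntegrable_right hu ⟨le_rfl, zero_le_one⟩
      ⟨zero_le_one, le_rfl⟩)
      (intervalIntegrable_const.sub intervalIntegral.intervalIntegrable_id),
    intervalIntegral.integral_sub intervalIntegrable_const intervalIntegral.intervalIntegrable_id,
    integral_id, intervalIntegral.integral_const, smul_eq_mul]
  · ring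
  rw [uIcc_of_le zero_le_one] at hv
  dsimp only
  rw [hD.apply_one_sub_one_sub hu hv]
  ring

theorem integral_half_one_integral (hC : IsCopula C) (hD : ConcentratedOnDiagonals C) :
    ∫ u in 1 / 2..1, ∫ v in 0..1, C u v = (∫ u in 0..1 / 2, ∫ v in 0..1, C u v) + 1 / 8 := by
  have h := intervalIntegral.integral_comp_sub_left (a := 0) (b := 1 / 2)
    (fun u => ∫ v in 0..1, C u v) 1
  norm_num only [sub_zero] at h
  rw [← h, intervalIntegral.integral_congr
      (g := fun u => (∫ v in 0..1, C u v) + (1 / 2 - u)) fun u hu => ?_,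
    intervalIntegral.integral_add
      (hC.intervalIntegrable_integral ⟨le_rfl, zero_le_one⟩ ⟨by norm_num, by norm_num⟩)
      (intervalIntegrable_const.sub intervalIntegral.intervalIntegrable_id),
    intervalIntegral.integral_sub intervalIntegrable_const intervalIntegral.intervalIntegrable_id,
    integral_id, intervalIntegral.integral_const, smul_eq_mul]
  · norm_num
  rw [uIcc_of_le (by norm_num)] at hu
  simp only [hD.integral_section_one_sub hC ⟨hu.1, hu.2.trans (by norm_num)⟩]
  ring

theorem integral_zero_half_integral (hC : IsCopula C) (hD : ConcentratedOnDiagonals C) :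
    ∫ u in 0..1 / 2, ∫ v in 0..1, C u v = 4 * (∫ v in 0..1 / 2, C v v * (1 / 2 - v)) + 1 / 48 := by
  have hδ : ContinuousOn (fun u => C u u) (Icc 0 (1 / 2)) :=
    hC.lipschitzOnWith_diag.continuousOn.mono (Icc_subset_Icc_right (by norm_num))
  have hδ_int : IntervalIntegrable (fun u => C u u * (1 / 2 - u)) volume 0 (1 / 2) :=
    (hδ.mul (by fun_prop)).intervalIntegrable_of_Icc (by norm_num)
  have hT_int : IntervalIntegrable (fun u => ∫ v in 0..u, C v v) volume 0 (1 / 2) :=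
    (intervalIntegral.continuousOn_primitive_interval'
      (hC.intervalIntegrable_diag ⟨le_rfl, zero_le_one⟩ ⟨by norm_num, by norm_num⟩)
      left_mem_uIcc).intervalIntegrable
  rw [intervalIntegral.integral_congr (g := fun u =>
      (2 * (∫ v in 0..u, C v v) + 2 * (C u u * (1 / 2 - u))) + u ^ 2 / 2) fun u hu => ?_,
    intervalIntegral.integral_add ((hT_int.const_mul 2).add (hδ_int.const_mul 2))
      (Continuous.intervalIntegrable (by fun_prop) _ _),
    intervalIntegral.integral_add (hT_int.const_mul 2) (hδ_int.const_mul 2),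
    intervalIntegral.integral_const_mul, intervalIntegral.integral_const_mul,
    integral_primitive_eq_integral_mul_sub (by norm_num) hδ, intervalIntegral.integral_div,
    integral_pow]
  · push_cast
    ring
  rw [uIcc_of_le (by norm_num)] at hu
  simp only [hD.integral_section_of_le_half hC hu]
  ring

theorem integral_integral (hC : IsCopula C) (hD : ConcentratedOnDiagonals C) :
    ∫ u in 0..1, ∫ v in 0..1, C u v = 8 * (∫ v in 0..1 / 2, C v v * (1 / 2 - v)) + 1 / 6 := by
  have hhalf : (1 / 2 : ℝ) ∈ Icc (0:ℝ) 1 := ⟨by norm_num, by norm_num⟩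
  rw [← intervalIntegral.integral_add_adjacent_intervals
    (hC.intervalIntegrable_integral ⟨le_rfl, zero_le_one⟩ hhalf)
    (hC.intervalIntegrable_integral hhalf ⟨zero_le_one, le_rfl⟩),
    hD.integral_half_one_integral hC, hD.integral_zero_half_integral hC]
  ring

end ConcentratedOnDiagonals

theorem lower_bound_diagonal_case (C : ℝ → ℝ → ℝ) (hC : IsCopula C)
    (hD : ConcentratedOnDiagonals C) :
    2 * Real.sqrt 3 / 9 * (1 + 2 * spearmanFootrule C) ^ ((3:ℝ)/2) - 1 ≤ spearmanRho C := by
  have hδ_nonneg : ∀ v ∈ Icc (0:ℝ) (1 / 2), 0 ≤ C v v := fun v hv =>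
    have hv' : v ∈ Icc (0:ℝ) 1 := ⟨hv.1, hv.2.trans (by norm_num)⟩
    (hC.1 v hv' v hv').1
  have hcore := two_mul_integral_rpow_div_six_le_integral_mul_sub (by norm_num) hδ_nonneg
    (hC.2.1 0 ⟨le_rfl, zero_le_one⟩).1 (hD.monotoneOn_sub_diag hC)
  have hS : 0 ≤ 2 * ∫ v in 0..1 / 2, C v v :=
    mul_nonneg zero_le_two (intervalIntegral.integral_nonneg (by norm_num) hδ_nonneg)
  have hφ : 1 + 2 * spearmanFootrule C = 12 * (2 * ∫ v in 0..1 / 2, C v v) := by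
    rw [spearmanFootrule, hD.integral_diag hC]
    ring
  have hρ : spearmanRho C = 96 * (∫ v in 0..1 / 2, C v v * (1 / 2 - v)) - 1 := by
    rw [spearmanRho, hD.integral_integral hC]
    ring
  have h12 : (12:ℝ) ^ ((3:ℝ) / 2) = 24 * √3 := by
    rw [Real.rpow_div_two_eq_sqrt _ (by norm_num), show (12:ℝ) = 2 ^ 2 * 3 by norm_num,
      Real.sqrt_mul (by norm_num), Real.sqrt_sq zero_le_two]
    norm_cast
    rw [mul_pow, pow_succ √3 2, Real.sq_sqrt zero_le_three]
    ring
  rw [hφ, hρ, Real.mul_rpow (by norm_num) hS, h12]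
  linear_combination 96 * hcore + (16 / 3 * (2 * ∫ v in 0..1 / 2, C v v) ^ ((3:ℝ) / 2)) *
    Real.mul_self_sqrt zero_le_three
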